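/- arXiv:2408.17163 — 5 statements merged into one kernel-verified Lean document; each statement's English description precedes it below -/
import Mathlib

section
/- Let u, v ∈ ℝ^d be vectors with ‖u‖₀ ≤ k_u and ‖v‖₀ ≤ k_v where k_v < k_u. Let T_k denote the top-k operator that keeps the k largest-magnitude coordinates of a vector and zeros out the rest. Then for any k with k_v ≤ k ≤ k_u, ‖T_k(u) − u‖₂² ≤ ((k_u − k)/(k_u − k_v)) · ‖u − v‖₂². -/
open Finset

/-- `IsTopKWith Q k u t` : `t` is obtained from `u` by keeping the coordinates in `Q`,
a set of `k` coordinates of largest absolute value of `u`, and zeroing out the rest. -/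
def IsTopKWith {d : ℕ} (Q : Finset (Fin d)) (k : ℕ) (u t : Fin d → ℝ) : Prop :=
  Q.card = k ∧ (∀ i, t i = if i ∈ Q then u i else 0) ∧
    ∀ i ∈ Q, ∀ j ∉ Q, |u j| ≤ |u i|

/-- `t` is a top-`k` approximation `T_k(u)` of `u`. -/
def IsTopK {d : ℕ} (k : ℕ) (u t : Fin d → ℝ) : Prop :=
  ∃ Q : Finset (Fin d), IsTopKWith Q k u t

lemma key_arith (X Y Z m a b k kv ku Ac : ℝ) (hm : 0 ≤ m) (hX : X ≤ a*m) (hY : Y ≤ b*m)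
    (hZ : Ac*m ≤ Z) (hA : k + b - kv ≤ Ac) (hab : a+b ≤ ku - k) (hkv : kv ≤ k) (hk : k ≤ ku) :
    (X+Y)*(ku-kv) ≤ (ku-k)*(Z+X) := by
  nlinarith [mul_nonneg (mul_nonneg hm (sub_nonneg.2 hkv)) (by linarith : (0:ℝ) ≤ ku - k - (a+b)),
    mul_le_mul_of_nonneg_left hX (sub_nonneg.2 hkv),
    mul_le_mul_of_nonneg_left hY (by linarith : (0:ℝ) ≤ ku - kv),
    mul_le_mul_of_nonneg_left hZ (sub_nonneg.2 hk),
    mul_le_mul_of_nonneg_left (mul_le_mul_of_nonneg_right hA hm) (sub_nonneg.2 hk)]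

/-- Property of the top-`k` operator: if `‖u‖₀ ≤ k_u`, `‖v‖₀ ≤ k_v`, `k_v < k_u` and
`k_v ≤ k ≤ k_u`, then `‖T_k(u) − u‖₂² ≤ ((k_u − k)/(k_u − k_v)) ‖u − v‖₂²`. -/
theorem topk_property {d : ℕ} (u v : Fin d → ℝ) (ku kv k : ℕ)
    (hu : (Function.support u).ncard ≤ ku) (hv : (Function.support v).ncard ≤ kv)
    (hkvu : kv < ku) (hk₁ : kv ≤ k) (hk₂ : k ≤ ku)
    (t : Fin d → ℝ) (ht : IsTopK k u t) :
    ∑ i, (t i - u i) ^ 2 ≤ ((ku - k : ℝ) / (ku - kv : ℝ)) * ∑ i, (u i - v i) ^ 2 := by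
  obtain ⟨Q, hQcard, hQt, hQmax⟩ := ht
  set Su : Finset (Fin d) := univ.filter (fun i => u i ≠ 0) with hSudef
  set Sv : Finset (Fin d) := univ.filter (fun i => v i ≠ 0) with hSvdef
  have hsupu : Function.support u = ↑Su := by ext i; simp [hSudef, Function.support]
  have hsupv : Function.support v = ↑Sv := by ext i; simp [hSvdef, Function.support]
  rw [hsupu, Set.ncard_coe_finset] at hu
  rw [hsupv, Set.ncard_coe_finset] at hv
  have hSuQ : ∀ i ∉ Su, u i = 0 := by intro i hi; by_contra h; exact hi (by simp [hSudef, h])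
  have hSvQ : ∀ i ∉ Sv, v i = 0 := by intro i hi; by_contra h; exact hi (by simp [hSvdef, h])
  have hD : (0:ℝ) < (ku:ℝ) - kv := by
    have : (kv:ℝ) < ku := by exact_mod_cast hkvu
    linarith
  have hkR : (k:ℝ) ≤ ku := by exact_mod_cast hk₂
  have hkvR : (kv:ℝ) ≤ k := by exact_mod_cast hk₁
  -- LHS computation
  have hLHS : ∑ i, (t i - u i) ^ 2 = ∑ i ∈ Su \ Q, u i ^ 2 := by
    have h1 : ∀ i, (t i - u i) ^ 2 = if i ∈ Q then 0 else u i ^ 2 := by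
      intro i; rw [hQt i]; split <;> ring
    rw [Finset.sum_congr rfl fun i _ => h1 i, Finset.sum_ite, Finset.sum_const_zero, zero_add]
    refine (Finset.sum_subset ?_ ?_).symm
    · intro i hi; simp only [Finset.mem_sdiff] at hi; simp [hi.2]
    · intro i hi hni
      simp only [Finset.mem_filter, Finset.mem_univ, true_and] at hi
      have : i ∉ Su := by
        intro hSu; exact hni (Finset.mem_sdiff.2 ⟨hSu, hi⟩)
      rw [hSuQ i this]; ring
  rw [hLHS]
  by_cases hk0 : k = 0
  · -- then kv = 0, v = 0
    subst hk0
    have hkv0 : kv = 0 := Nat.le_zero.1 hk₁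
    subst hkv0
    have hv0 : ∀ i, v i = 0 := by
      intro i
      apply hSvQ
      have : Sv.card = 0 := Nat.le_zero.1 hv
      simp [Finset.card_eq_zero.1 this]
    have hku0 : (ku:ℝ) ≠ 0 := by positivity
    simp only [Nat.cast_zero, sub_zero, div_self hku0, one_mul]
    calc ∑ i ∈ Su \ Q, u i ^ 2 ≤ ∑ i, u i ^ 2 :=
          Finset.sum_le_sum_of_subset_of_nonneg (Finset.subset_univ _)
            (fun i _ _ => sq_nonneg _)
      _ = ∑ i, (u i - v i) ^ 2 := by
          refine Finset.sum_congr rfl fun i _ => by rw [hv0 i, sub_zero]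
  -- now k ≥ 1
  have hQne : Q.Nonempty := Finset.card_pos.1 (hQcard ▸ Nat.pos_of_ne_zero hk0)
  by_cases hcase : Su ⊆ Q
  · have : Su \ Q = ∅ := Finset.sdiff_eq_empty_iff_subset.2 hcase
    rw [this, Finset.sum_empty]
    have h1 : (0:ℝ) ≤ ((ku:ℝ) - k) / ((ku:ℝ) - kv) := by
      apply div_nonneg <;> linarith
    exact mul_nonneg h1 (Finset.sum_nonneg fun i _ => sq_nonneg _)
  · obtain ⟨j0, hj0Su, hj0Q⟩ := Finset.not_subset.1 hcase
    have hj0 : u j0 ≠ 0 := by simpa [hSudef] using hj0Su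
    have hQSu : Q ⊆ Su := by
      intro i hi
      by_contra h
      have := hQmax i hi j0 hj0Q
      rw [hSuQ i h] at this
      simp only [abs_zero] at this
      exact hj0 (abs_nonpos_iff.1 this)
    set m : ℝ := Q.inf' hQne (fun i => u i ^ 2) with hmdef
    have hm0 : 0 ≤ m := Finset.le_inf' hQne _ (fun i _ => sq_nonneg _)
    have hout : ∀ j ∉ Q, u j ^ 2 ≤ m := by
      intro j hj
      apply Finset.le_inf' hQne
      intro i hi
      have h := hQmax i hi j hj
      calc u j ^ 2 = |u j| ^ 2 := (sq_abs _).symm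
        _ ≤ |u i| ^ 2 := by exact pow_le_pow_left₀ (abs_nonneg _) h 2
        _ = u i ^ 2 := sq_abs _
    have hmin : ∀ i ∈ Q, m ≤ u i ^ 2 := fun i hi => Finset.inf'_le _ hi
    set Xs : Finset (Fin d) := (Su \ Q).filter (fun i => i ∉ Sv) with hXsdef
    set Ys : Finset (Fin d) := (Su \ Q).filter (fun i => i ∈ Sv) with hYsdef
    set A : Finset (Fin d) := Q \ Sv with hAdef
    set X : ℝ := ∑ i ∈ Xs, u i ^ 2 with hXdef
    set Y : ℝ := ∑ i ∈ Ys, u i ^ 2 with hYdef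
    set Z : ℝ := ∑ i ∈ A, u i ^ 2 with hZdef
    have hsplit : ∑ i ∈ Su \ Q, u i ^ 2 = Y + X := by
      rw [hYdef, hXdef, hYsdef, hXsdef, Finset.sum_filter_add_sum_filter_not]
    have hX : X ≤ (Xs.card : ℝ) * m := by
      have := Finset.sum_le_card_nsmul Xs (fun i => u i ^ 2) m
        (fun i hi => hout i (Finset.mem_sdiff.1 (Finset.mem_of_mem_filter i hi)).2)
      simpa [nsmul_eq_mul] using this
    have hY : Y ≤ (Ys.card : ℝ) * m := by
      have := Finset.sum_le_card_nsmul Ys (fun i => u i ^ 2) m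
        (fun i hi => hout i (Finset.mem_sdiff.1 (Finset.mem_of_mem_filter i hi)).2)
      simpa [nsmul_eq_mul] using this
    have hZ : (A.card : ℝ) * m ≤ Z := by
      have := Finset.card_nsmul_le_sum A (fun i => u i ^ 2) m
        (fun i hi => hmin i (Finset.mem_sdiff.1 hi).1)
      simpa [nsmul_eq_mul] using this
    -- counting
    have hcount1 : A.card + (Q ∩ Sv).card = k := by
      rw [hAdef, Finset.card_sdiff_add_card_inter, hQcard]
    have hdisj1 : Disjoint (Q ∩ Sv) Ys := by
      apply Finset.disjoint_left.2
      intro i hi hi'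
      have h1 : i ∈ Q := (Finset.mem_inter.1 hi).1
      have h2 : i ∉ Q := (Finset.mem_sdiff.1 (Finset.mem_of_mem_filter i hi')).2
      exact h2 h1
    have hcount2 : (Q ∩ Sv).card + Ys.card ≤ kv := by
      rw [← Finset.card_union_of_disjoint hdisj1]
      refine le_trans (Finset.card_le_card ?_) hv
      intro i hi
      rcases Finset.mem_union.1 hi with h | h
      · exact (Finset.mem_inter.1 h).2
      · exact (Finset.mem_filter.1 h).2
    have hA : (k:ℝ) + (Ys.card:ℝ) - (kv:ℝ) ≤ (A.card : ℝ) := by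
      have h1 : (A.card:ℝ) + (Q ∩ Sv).card = k := by exact_mod_cast hcount1
      have h2 : ((Q ∩ Sv).card:ℝ) + Ys.card ≤ kv := by exact_mod_cast hcount2
      linarith
    have hcount3 : Xs.card + Ys.card = (Su \ Q).card := by
      have h := Finset.card_filter_add_card_filter_not (s := Su \ Q)
        (p := fun i => i ∈ Sv)
      rw [hXsdef, hYsdef]
      omega
    have hab : (Xs.card:ℝ) + (Ys.card:ℝ) ≤ (ku:ℝ) - k := by
      have h1 : (Su \ Q).card = Su.card - k := by rw [Finset.card_sdiff_of_subset hQSu, hQcard]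
      have h2 : Xs.card + Ys.card + k ≤ ku := by omega
      have := (Nat.cast_le (α := ℝ)).2 h2
      push_cast at this
      linarith
    -- RHS lower bound
    have hdisj2 : Disjoint A Xs := by
      apply Finset.disjoint_left.2
      intro i hi hi'
      exact (Finset.mem_sdiff.1 (Finset.mem_of_mem_filter i hi')).2 (Finset.mem_sdiff.1 hi).1
    have hRHS : Z + X ≤ ∑ i, (u i - v i) ^ 2 := by
      calc Z + X = ∑ i ∈ A ∪ Xs, u i ^ 2 := (Finset.sum_union hdisj2).symm
        _ = ∑ i ∈ A ∪ Xs, (u i - v i) ^ 2 := by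
            refine Finset.sum_congr rfl fun i hi => ?_
            have hv0 : v i = 0 := by
              apply hSvQ
              rcases Finset.mem_union.1 hi with h | h
              · exact (Finset.mem_sdiff.1 h).2
              · exact (Finset.mem_filter.1 h).2
            rw [hv0, sub_zero]
        _ ≤ ∑ i, (u i - v i) ^ 2 :=
            Finset.sum_le_sum_of_subset_of_nonneg (Finset.subset_univ _)
              (fun i _ _ => sq_nonneg _)
    rw [hsplit]
    have hkey : (X + Y) * ((ku:ℝ) - kv) ≤ ((ku:ℝ) - k) * (Z + X) :=
      key_arith X Y Z m (Xs.card) (Ys.card) k kv ku (A.card) hm0 hX hY hZ hA hab hkvR hkR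
    have hc : (0:ℝ) ≤ ((ku:ℝ) - k) / ((ku:ℝ) - kv) := div_nonneg (by linarith) (by linarith)
    calc Y + X ≤ (((ku:ℝ) - k) / ((ku:ℝ) - kv)) * (Z + X) := by
          rw [div_mul_eq_mul_div, le_div_iff₀ hD]; linarith
      _ ≤ (((ku:ℝ) - k) / ((ku:ℝ) - kv)) * ∑ i, (u i - v i) ^ 2 :=
          mul_le_mul_of_nonneg_left hRHS hc
end

section
/- Let H ∈ ℝ^{d×d} be symmetric positive definite with smallest eigenvalue μ > 0, S ⊆ [d], and define H^S = I_S^⊤ (I_S H^{-1} I_S^⊤)^{-1} I_S. Then ‖H^{-1} H^S H^{-1}‖₂ ≤ 1/μ. -/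
open Matrix Finset

/-- The selection matrix `I_S ∈ ℝ^{|S|×d}` whose rows are the standard basis vectors
`eᵢᵀ` for `i ∈ S`. -/
def selMat {d : ℕ} (S : Finset (Fin d)) : Matrix {i // i ∈ S} (Fin d) ℝ :=
  Matrix.of fun i j => if (i : Fin d) = j then (1 : ℝ) else 0

/-- The matrix `H^S = I_Sᵀ (I_S H⁻¹ I_Sᵀ)⁻¹ I_S`. -/
noncomputable def HmatS {d : ℕ} (H : Matrix (Fin d) (Fin d) ℝ) (S : Finset (Fin d)) :
    Matrix (Fin d) (Fin d) ℝ :=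
  (selMat S)ᵀ * (selMat S * H⁻¹ * (selMat S)ᵀ)⁻¹ * selMat S

/-- The diagonal projection matrix `E_S` onto the coordinates in `S`. -/
def projMat {d : ℕ} (S : Finset (Fin d)) : Matrix (Fin d) (Fin d) ℝ :=
  Matrix.diagonal fun i => if i ∈ S then (1 : ℝ) else 0

/-! Put `K = H^S` and `M = H⁻¹ K H⁻¹`. Since `K H⁻¹ K = K` (that is, `H⁻¹ K` is a projection),
`M H M = M`, and `M` is symmetric. Hence for `y = M x`,
`μ ‖y‖² ≤ yᵀ H y = xᵀ M H M x = xᵀ y ≤ ‖x‖ ‖y‖`. -/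

namespace Matrix

variable {m n R : Type*} [Fintype m]

section CommSemiring

variable [CommSemiring R]

theorem IsSymm.transpose_mul_mul {X : Matrix m m R} (hX : X.IsSymm) (A : Matrix m n R) :
    (Aᵀ * X * A).IsSymm := by
  simp only [IsSymm, transpose_mul, transpose_transpose, hX.eq, Matrix.mul_assoc]

theorem IsSymm.dotProduct_mulVec_mulVec_eq [Fintype n] {M H : Matrix n n R} (hM : M.IsSymm)
    (hMHM : M * H * M = M) (x : n → R) : (M *ᵥ x) ⬝ᵥ H *ᵥ (M *ᵥ x) = x ⬝ᵥ M *ᵥ x :=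
  calc (M *ᵥ x) ⬝ᵥ H *ᵥ (M *ᵥ x) = x ⬝ᵥ (Mᵀ * H * M) *ᵥ x := by
        rw [← mulVec_mulVec, ← mulVec_mulVec, dotProduct_mulVec x, vecMul_transpose]
    _ = x ⬝ᵥ M *ᵥ x := by rw [hM.eq, hMHM]

end CommSemiring

variable [CommRing R] [Fintype n] [DecidableEq m] (A : Matrix m n R) {G : Matrix n n R}

theorem transpose_mul_inv_mul_mul_self (hB : IsUnit (A * G * Aᵀ).det) :
    Aᵀ * (A * G * Aᵀ)⁻¹ * A * G * (Aᵀ * (A * G * Aᵀ)⁻¹ * A) = Aᵀ * (A * G * Aᵀ)⁻¹ * A :=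
  calc Aᵀ * (A * G * Aᵀ)⁻¹ * A * G * (Aᵀ * (A * G * Aᵀ)⁻¹ * A)
      = Aᵀ * ((A * G * Aᵀ)⁻¹ * (A * G * Aᵀ)) * (A * G * Aᵀ)⁻¹ * A := by
        simp only [Matrix.mul_assoc]
    _ = Aᵀ * (A * G * Aᵀ)⁻¹ * A := by rw [nonsing_inv_mul _ hB, Matrix.mul_one]

theorem isSymm_transpose_mul_inv_mul (hG : G.IsSymm) : (Aᵀ * (A * G * Aᵀ)⁻¹ * A).IsSymm := by
  have hB : (A * G * Aᵀ).IsSymm := by simpa using hG.transpose_mul_mul Aᵀ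
  exact hB.inv.transpose_mul_mul A

end Matrix

theorem Real.sqrt_sum_sq_le_of_mul_sum_sq_le_dotProduct {ι : Type*} [Fintype ι] {μ : ℝ}
    (hμ : 0 < μ) {x y : ι → ℝ} (h : μ * ∑ i, y i ^ 2 ≤ x ⬝ᵥ y) :
    √(∑ i, y i ^ 2) ≤ 1 / μ * √(∑ i, x i ^ 2) := by
  have hmul : μ * √(∑ i, y i ^ 2) * √(∑ i, y i ^ 2) ≤
      √(∑ i, x i ^ 2) * √(∑ i, y i ^ 2) := by
    rw [mul_assoc, Real.mul_self_sqrt (by positivity)]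
    exact h.trans (Real.sum_mul_le_sqrt_mul_sqrt _ x y)
  rw [one_div, inv_mul_eq_div, le_div_iff₀ hμ, mul_comm]
  rcases (Real.sqrt_nonneg (∑ i, y i ^ 2)).eq_or_lt with h0 | h0
  · rw [← h0, mul_zero]; positivity
  · exact le_of_mul_le_mul_right hmul h0

theorem selMat_mul_transpose_selMat {d : ℕ} (S : Finset (Fin d)) :
    selMat S * (selMat S)ᵀ = 1 := by
  ext i j
  simp [selMat, mul_apply, one_apply]

theorem selMat_vecMul_injective {d : ℕ} (S : Finset (Fin d)) :
    Function.Injective (selMat S).vecMul := fun v w h => by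
  simpa [vecMul_vecMul, selMat_mul_transpose_selMat] using congrArg (· ᵥ* (selMat S)ᵀ) h

theorem Matrix.PosDef.selMat_mul_mul_transpose {d : ℕ} {G : Matrix (Fin d) (Fin d) ℝ}
    (hG : G.PosDef) (S : Finset (Fin d)) : (selMat S * G * (selMat S)ᵀ).PosDef := by
  simpa using hG.mul_mul_conjTranspose_same (selMat_vecMul_injective S)

theorem HmatS_mul_inv_mul_HmatS {d : ℕ} {H : Matrix (Fin d) (Fin d) ℝ} (hH : H.PosDef)
    (S : Finset (Fin d)) : HmatS H S * H⁻¹ * HmatS H S = HmatS H S :=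
  transpose_mul_inv_mul_mul_self _ (hH.inv.selMat_mul_mul_transpose S).det_pos.ne'.isUnit

/-- For symmetric positive definite `H` with `μ·I ⪯ H` (smallest eigenvalue `μ > 0`),
the spectral norm bound `‖H⁻¹ H^S H⁻¹‖₂ ≤ 1/μ` holds, i.e.
`‖H⁻¹ H^S H⁻¹ x‖₂ ≤ (1/μ)‖x‖₂` for every vector `x`. -/
theorem spectral_norm_bound {d : ℕ} (H : Matrix (Fin d) (Fin d) ℝ) (hH : H.PosDef)
    (μ : ℝ) (hμ : 0 < μ)
    (hμH : ∀ x : Fin d → ℝ, μ * ∑ i, x i ^ 2 ≤ x ⬝ᵥ H.mulVec x)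
    (S : Finset (Fin d)) :
    ∀ x : Fin d → ℝ,
      Real.sqrt (∑ i, ((H⁻¹ * HmatS H S * H⁻¹).mulVec x i) ^ 2) ≤
        (1 / μ) * Real.sqrt (∑ i, x i ^ 2) := by
  intro x
  set M := H⁻¹ * HmatS H S * H⁻¹
  have hHinv : H⁻¹.IsSymm := hH.isHermitian.inv
  have hM : M.IsSymm := by
    have := (isSymm_transpose_mul_inv_mul (selMat S) hHinv).transpose_mul_mul H⁻¹
    rwa [hHinv.eq] at this
  have hMHM : M * H * M = M := by
    simp only [M, Matrix.mul_assoc, mul_nonsing_inv_cancel_left _ _ hH.det_pos.ne'.isUnit]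
    simp only [← Matrix.mul_assoc, HmatS_mul_inv_mul_HmatS hH S]
  refine Real.sqrt_sum_sq_le_of_mul_sum_sq_le_dotProduct hμ ?_
  exact (hμH (M *ᵥ x)).trans_eq (hM.dotProduct_mulVec_mulVec_eq hMHM x)
end

section
/- Let H be symmetric positive definite, S ⊆ [d], H^S = I_S^⊤(I_S H^{-1} I_S^⊤)^{-1} I_S, and suppose x ∈ ℝ^d satisfies ⟨E_S x, H E_S x⟩ ≤ L‖E_S x‖₂². Then x^⊤ H^S x ≤ L‖E_S x‖₂² = L‖I_S x‖₂². -/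
open Matrix Finset

lemma mulVec_dot {m n : Type*} [Fintype m] [Fintype n] (M : Matrix m n ℝ)
    (y : n → ℝ) (v : m → ℝ) : M.mulVec y ⬝ᵥ v = y ⬝ᵥ Mᵀ.mulVec v := by
  rw [dotProduct_mulVec, vecMul_transpose]

lemma selMat_mul_projMat {d : ℕ} (S : Finset (Fin d)) :
    selMat S * projMat S = selMat S := by
  ext i j
  simp only [mul_apply, selMat, projMat, Matrix.diagonal_apply, of_apply, ite_mul, one_mul,
    zero_mul]
  rw [Finset.sum_eq_single j]
  · rcases eq_or_ne (i : Fin d) j with h | h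
    · subst h; simp [i.2]
    · simp [h]
  · intro k _ hk
    simp [hk]
  · simp

lemma selMat_transpose_mulVec {d : ℕ} (S : Finset (Fin d)) (v : {i // i ∈ S} → ℝ)
    (i : {i // i ∈ S}) : (selMat S)ᵀ.mulVec v (i : Fin d) = v i := by
  simp only [mulVec, dotProduct, transpose_apply, selMat, of_apply, ite_mul, one_mul, zero_mul]
  rw [Finset.sum_eq_single i]
  · simp
  · intro k _ hk
    have : (k : Fin d) ≠ (i : Fin d) := fun h => hk (Subtype.ext h)
    simp [this]
  · simp

/-- If `(E_S x)ᵀ H (E_S x) ≤ L ‖E_S x‖₂²`, then `xᵀ H^S x ≤ L ‖E_S x‖₂² = L ‖I_S x‖₂²`. -/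
theorem quadform_restricted_bound {d : ℕ} (H : Matrix (Fin d) (Fin d) ℝ) (hH : H.PosDef)
    (S : Finset (Fin d)) (L : ℝ) (x : Fin d → ℝ)
    (hL : (projMat S).mulVec x ⬝ᵥ H.mulVec ((projMat S).mulVec x) ≤
      L * ∑ i, ((projMat S).mulVec x i) ^ 2) :
    x ⬝ᵥ (HmatS H S).mulVec x ≤ L * ∑ i, ((projMat S).mulVec x i) ^ 2 ∧
      (∑ i, ((projMat S).mulVec x i) ^ 2) = ∑ i, ((selMat S).mulVec x i) ^ 2 := by
  classical
  set I := selMat S with hI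
  set E := projMat S with hE
  have hHi : H⁻¹.PosDef := hH.inv
  have hHsym : Hᵀ = H := by
    have := hH.1
    rwa [IsHermitian, conjTranspose_eq_transpose_of_trivial] at this
  have hHisym : (H⁻¹)ᵀ = H⁻¹ := by
    rw [Matrix.transpose_nonsing_inv, hHsym]
  set A : Matrix {i // i ∈ S} {i // i ∈ S} ℝ := I * H⁻¹ * Iᵀ with hA_def
  have hA : A.PosDef := by
    refine posDef_iff_dotProduct_mulVec.mpr ⟨?_, ?_⟩
    · show Aᴴ = A
      rw [hA_def, conjTranspose_eq_transpose_of_trivial, transpose_mul, transpose_mul,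
        transpose_transpose, hHisym, ← Matrix.mul_assoc]
    · intro v hv
      have hIv : Iᵀ.mulVec v ≠ 0 := by
        intro h
        apply hv
        funext i
        have := congrFun h (i : Fin d)
        rwa [hI, selMat_transpose_mulVec, Pi.zero_apply] at this
      have hpos := (posDef_iff_dotProduct_mulVec.mp hHi).2 hIv
      simp only [star_trivial] at hpos ⊢
      calc v ⬝ᵥ A.mulVec v = v ⬝ᵥ I.mulVec (H⁻¹.mulVec (Iᵀ.mulVec v)) := by
            rw [hA_def, ← mulVec_mulVec, ← mulVec_mulVec]
        _ = Iᵀ.mulVec v ⬝ᵥ H⁻¹.mulVec (Iᵀ.mulVec v) := by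
            rw [dotProduct_comm, mulVec_dot]
            exact dotProduct_comm _ _
        _ > 0 := hpos
  have hAdet : IsUnit A.det := hA.det_pos.ne'.isUnit
  set B := A⁻¹ with hB_def
  have hBA : B * A = 1 := Matrix.nonsing_inv_mul A hAdet
  have hAsym : Aᵀ = A := by
    have := hA.1
    rwa [IsHermitian, conjTranspose_eq_transpose_of_trivial] at this
  have hBsym : Bᵀ = B := by
    rw [hB_def, Matrix.transpose_nonsing_inv, hAsym]
  have hHS : HmatS H S = Iᵀ * B * I := rfl
  have hHSsym : (HmatS H S)ᵀ = HmatS H S := by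
    rw [hHS, transpose_mul, transpose_mul, transpose_transpose, hBsym, Matrix.mul_assoc]
  have hIE : I * E = I := selMat_mul_projMat S
  have hEsym : Eᵀ = E := by
    rw [hE]; simp [projMat, diagonal_transpose]
  have hEI : E * Iᵀ = Iᵀ := by
    have := congrArg transpose hIE
    rwa [transpose_mul, hEsym] at this
  have hHSE : HmatS H S * E = HmatS H S := by
    rw [hHS, Matrix.mul_assoc, hIE]
  have hEHS : E * HmatS H S = HmatS H S := by
    rw [hHS, ← Matrix.mul_assoc, ← Matrix.mul_assoc, hEI]
  set y := E.mulVec x with hy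
  set q := x ⬝ᵥ (HmatS H S).mulVec x with hq
  have hqy : y ⬝ᵥ (HmatS H S).mulVec y = q := by
    rw [hq, hy, mulVec_mulVec, hHSE, mulVec_dot, hEsym, mulVec_mulVec, hEHS]
  set w := (HmatS H S).mulVec y with hw
  set z := H⁻¹.mulVec w with hz
  have hHz : H.mulVec z = w := by
    rw [hz, mulVec_mulVec, Matrix.mul_nonsing_inv H hH.det_pos.ne'.isUnit, one_mulVec]
  have hyw : y ⬝ᵥ w = q := hqy
  have hHSHS : HmatS H S * H⁻¹ * HmatS H S = HmatS H S := by
    rw [hHS]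
    calc Iᵀ * B * I * H⁻¹ * (Iᵀ * B * I) = Iᵀ * B * (I * H⁻¹ * Iᵀ) * (B * I) := by
          simp only [Matrix.mul_assoc]
      _ = Iᵀ * (B * A * B) * I := by rw [← hA_def]; simp only [Matrix.mul_assoc]
      _ = Iᵀ * B * I := by rw [hBA, Matrix.one_mul]
  have hzHz : z ⬝ᵥ H.mulVec z = q := by
    rw [hHz, hz, mulVec_dot, hHisym, hw, mulVec_dot, hHSsym, mulVec_mulVec, mulVec_mulVec,
      hHSHS, hqy]
  have hzHy : z ⬝ᵥ H.mulVec y = q := by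
    rw [hz, mulVec_dot, hHisym, mulVec_mulVec,
      Matrix.nonsing_inv_mul H hH.det_pos.ne'.isUnit, one_mulVec, dotProduct_comm, hyw]
  have hyHz : y ⬝ᵥ H.mulVec z = q := by rw [hHz, hyw]
  have hnn : 0 ≤ (y - z) ⬝ᵥ H.mulVec (y - z) := by
    have := hH.posSemidef.dotProduct_mulVec_nonneg (y - z)
    simpa using this
  have hexp : (y - z) ⬝ᵥ H.mulVec (y - z) = y ⬝ᵥ H.mulVec y - q := by
    rw [mulVec_sub, dotProduct_sub, sub_dotProduct, sub_dotProduct, hzHz, hzHy, hyHz]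
    ring
  have hqle : q ≤ y ⬝ᵥ H.mulVec y := by
    rw [hexp] at hnn
    linarith
  refine ⟨?_, ?_⟩
  · calc x ⬝ᵥ (HmatS H S).mulVec x = q := rfl
      _ ≤ y ⬝ᵥ H.mulVec y := hqle
      _ ≤ L * ∑ i, ((projMat S).mulVec x i) ^ 2 := hL
  · have h1 : ∀ i, E.mulVec x i = if i ∈ S then x i else 0 := by
      intro i
      rw [hE]
      simp [projMat, mulVec_diagonal, ite_mul]
    have h2 : ∀ i : {i // i ∈ S}, I.mulVec x i = x i := by
      intro i
      simp only [hI, selMat, mulVec, dotProduct, of_apply, ite_mul, one_mul, zero_mul]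
      rw [Finset.sum_eq_single (i : Fin d)]
      · simp
      · intro b _ hb
        exact if_neg fun h => hb h.symm
      · simp
    calc ∑ i, ((projMat S).mulVec x i) ^ 2 = ∑ i, (if i ∈ S then x i else 0) ^ 2 := by
          simp_rw [← hE, h1]
      _ = ∑ i ∈ S, (x i) ^ 2 := by
          simp_rw [apply_ite (· ^ 2), zero_pow two_ne_zero]
          rw [← Finset.sum_filter, Finset.filter_univ_mem]
      _ = ∑ i : {i // i ∈ S}, (x i) ^ 2 := (Finset.sum_coe_sort S _).symm
      _ = ∑ i, ((selMat S).mulVec x i) ^ 2 := by simp_rw [← hI, h2]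
end

section
/- Let f : ℝ^d → ℝ be twice differentiable with μ·I ⪯ ∇²f(θ) for all θ, M-Lipschitz Hessian, and let θ* be a k*-sparse minimizer with ∇f(θ*) = 0. Define the top-k Newton iteration θ_{t+1} = T_k(θ_t − H_t^{-1}∇f(θ_t)) with H_t = ∇²f(θ_t) and k ≥ k*. Then ‖θ_{t+1} − θ*‖₂ ≤ (1 + √(k*/k)) · (M/(2μ)) · ‖θ_t − θ*‖₂². -/
open scoped RealInnerProductSpace

/-!
The Newton point `w = θ_t − H_t⁻¹∇f(θ_t)` lands within `(M/2μ)‖θ_t − θ*‖²` of `θ*`: its error,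
hit by `H_t`, is minus the first-order Taylor remainder of `∇f` between `θ*` and `θ_t`, which
is at most `(M/2)‖θ_t − θ*‖²` because the Hessian is `M`-Lipschitz, and `μ`-coercivity of `H_t`
turns this into a bound on the error itself.

Hard thresholding then costs at most a factor `1 + √(k*/k)`. With `Q` the `k` kept
coordinates of `w` and `S = supp θ*`, `T_k(w) − θ*` is the restriction of `w − θ*` to `Q ∪ S`
minus the restriction of `w` to `S \ Q`. Since every kept coordinate dominates every dropped
one and `|S| ≤ k* ≤ k = |Q|`, the squares of `w` on `S \ Q` sum to at most `k*/k` times those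
on `Q \ S`, where `θ*` vanishes, i.e. to at most `(k*/k)‖w − θ*‖²`.
-/

theorem norm_sub_sub_fderiv_le_of_lipschitz_fderiv {E F : Type*}
    [NormedAddCommGroup E] [NormedSpace ℝ E] [NormedAddCommGroup F] [NormedSpace ℝ F]
    {g : E → F} {g' : E → E →L[ℝ] F} {M : ℝ} (hg : ∀ x, HasFDerivAt g (g' x) x)
    (hlip : ∀ x y, ‖g' x - g' y‖ ≤ M * ‖x - y‖) (x y : E) :
    ‖g y - g x - g' y (y - x)‖ ≤ M / 2 * ‖y - x‖ ^ 2 := by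
  set e := y - x
  have hderiv : ∀ s : ℝ, HasDerivAt (fun s : ℝ => g (x + s • e) - g x - s • g' y e)
      (g' (x + s • e) e - g' y e) s := by
    intro s
    have hline : HasDerivAt (fun s : ℝ => x + s • e) e s := by
      simpa using ((hasDerivAt_id s).smul_const e).const_add x
    exact ((((hg _).comp_hasDerivAt s hline).sub_const (g x)).sub
      ((hasDerivAt_id' s).smul_const (g' y e))).congr_deriv (by rw [one_smul])
  have hbound : ∀ s ∈ Set.Ico (0 : ℝ) 1,
      ‖g' (x + s • e) e - g' y e‖ ≤ M * ‖e‖ ^ 2 * (1 - s) := by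
    rintro s ⟨-, hs1⟩
    have hdist : ‖x + s • e - y‖ = (1 - s) * ‖e‖ := by
      rw [show x + s • e - y = -((1 - s) • e) by simp only [e]; module, norm_neg, norm_smul,
        Real.norm_of_nonneg (by linarith)]
    calc ‖g' (x + s • e) e - g' y e‖ = ‖(g' (x + s • e) - g' y) e‖ := rfl
      _ ≤ ‖g' (x + s • e) - g' y‖ * ‖e‖ := ContinuousLinearMap.le_opNorm _ _
      _ ≤ M * ((1 - s) * ‖e‖) * ‖e‖ := by
        gcongr
        exact hdist ▸ hlip _ _
      _ = M * ‖e‖ ^ 2 * (1 - s) := by ring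
  have hB : ∀ s : ℝ,
      HasDerivAt (fun s => M * ‖e‖ ^ 2 * (s - s ^ 2 / 2)) (M * ‖e‖ ^ 2 * (1 - s)) s := by
    intro s
    exact (((hasDerivAt_id' s).sub ((hasDerivAt_pow 2 s).div_const 2)).const_mul
      (M * ‖e‖ ^ 2)).congr_deriv (by push_cast; ring)
  have := image_norm_le_of_norm_deriv_right_le_deriv_boundary
    (fun s _ => (hderiv s).continuousAt.continuousWithinAt)
    (fun s _ => (hderiv s).hasDerivWithinAt) (by simp) hB hbound (Set.right_mem_Icc.2 zero_le_one)
  rw [one_smul, one_smul, show x + e = y from add_sub_cancel x y] at this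
  linarith

theorem mul_norm_le_norm_apply_of_coercive {E : Type*} [NormedAddCommGroup E]
    [InnerProductSpace ℝ E] {A : E →L[ℝ] E} {μ : ℝ} (hA : ∀ v, μ * ‖v‖ ^ 2 ≤ ⟪v, A v⟫) (v : E) :
    μ * ‖v‖ ≤ ‖A v‖ := by
  rcases (norm_nonneg v).eq_or_lt with hv | hv
  · simp [← hv]
  · refine le_of_mul_le_mul_right ?_ hv
    calc μ * ‖v‖ * ‖v‖ = μ * ‖v‖ ^ 2 := by ring
      _ ≤ ⟪v, A v⟫ := hA v
      _ ≤ ‖v‖ * ‖A v‖ := real_inner_le_norm v (A v)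
      _ = ‖A v‖ * ‖v‖ := mul_comm _ _

theorem norm_newton_step_sub_le {E : Type*} [NormedAddCommGroup E] [InnerProductSpace ℝ E]
    {g : E → E} {g' : E → E →L[ℝ] E} {μ M : ℝ} (hμ : 0 < μ)
    (hg : ∀ x, HasFDerivAt g (g' x) x) (hlip : ∀ x y, ‖g' x - g' y‖ ≤ M * ‖x - y‖)
    {x xs u : E} (hcoer : ∀ v, μ * ‖v‖ ^ 2 ≤ ⟪v, g' x v⟫) (hxs : g xs = 0) (hu : g' x u = g x) :
    ‖x - u - xs‖ ≤ M / (2 * μ) * ‖x - xs‖ ^ 2 := by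
  have hresidual : g' x (x - u - xs) = -(g x - g xs - g' x (x - xs)) := by
    rw [hxs, show x - u - xs = (x - xs) - u by abel, map_sub, hu]; abel
  have := calc
    μ * ‖x - u - xs‖ ≤ ‖g' x (x - u - xs)‖ := mul_norm_le_norm_apply_of_coercive hcoer _
    _ = ‖g x - g xs - g' x (x - xs)‖ := by rw [hresidual, norm_neg]
    _ ≤ M / 2 * ‖x - xs‖ ^ 2 := norm_sub_sub_fderiv_le_of_lipschitz_fderiv hg hlip xs x
  rw [div_mul_eq_mul_div, le_div_iff₀ (by positivity)]
  linarith

theorem sum_sq_sdiff_le_card_div_card_mul {α : Type*} [DecidableEq α] {Q S : Finset α}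
    {v : α → ℝ} (hdom : ∀ i ∈ Q, ∀ j ∉ Q, |v j| ≤ |v i|) (hcard : S.card ≤ Q.card) :
    ∑ j ∈ S \ Q, v j ^ 2 ≤ (S.card / Q.card : ℝ) * ∑ i ∈ Q \ S, v i ^ 2 := by
  set A := ∑ j ∈ S \ Q, v j ^ 2
  set B := ∑ i ∈ Q \ S, v i ^ 2
  have hQ := Finset.card_sdiff_add_card_inter Q S
  have hS := Finset.card_sdiff_add_card_inter S Q
  rw [Finset.inter_comm] at hS
  have hB : 0 ≤ B := Finset.sum_nonneg fun i _ => sq_nonneg _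
  have hdouble : ((Q \ S).card : ℝ) * A ≤ (S \ Q).card * B := by
    rw [← nsmul_eq_mul, ← Finset.sum_const, Finset.mul_sum]
    refine Finset.sum_le_sum fun i hi => ?_
    rw [← nsmul_eq_mul, ← Finset.sum_const]
    refine Finset.sum_le_sum fun j hj => sq_le_sq.2 ?_
    exact hdom i (Finset.mem_sdiff.1 hi).1 j (Finset.mem_sdiff.1 hj).2
  rcases Nat.eq_zero_or_pos (Q \ S).card with ha | ha
  · have : S \ Q = ∅ := Finset.card_eq_zero.1 (by omega)
    simp only [A, this, Finset.sum_empty]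
    positivity
  · rw [div_mul_eq_mul_div, le_div_iff₀ (by exact_mod_cast (by omega : 0 < Q.card))]
    have hra : ((S \ Q).card : ℝ) ≤ (Q \ S).card := by exact_mod_cast (by omega)
    rw [← hQ, ← hS]
    push_cast
    refine le_of_mul_le_mul_left ?_ (by exact_mod_cast ha : (0 : ℝ) < (Q \ S).card)
    have hsB : 0 ≤ ((Q ∩ S).card : ℝ) * B := by positivity
    nlinarith [mul_le_mul_of_nonneg_left hra hsB]

theorem EuclideanSpace.norm_sq_toLp_ite {ι : Type*} [Fintype ι] [DecidableEq ι] (P : Finset ι)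
    (x : ι → ℝ) :
    ‖(WithLp.toLp 2 fun i => if i ∈ P then x i else 0 : EuclideanSpace ℝ ι)‖ ^ 2 =
      ∑ i ∈ P, x i ^ 2 := by
  simp only [EuclideanSpace.real_norm_sq_eq, ite_pow, ne_eq, OfNat.ofNat_ne_zero,
    not_false_eq_true, zero_pow, Fintype.sum_ite_mem]

theorem norm_topK_sub_le {d k kstar : ℕ} (hk : kstar ≤ k) {v θs t : EuclideanSpace ℝ (Fin d)}
    (hsparse : (Function.support fun i => θs i).ncard ≤ kstar)
    (ht : IsTopK k (fun i => v i) (fun i => t i)) :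
    ‖t - θs‖ ≤ (1 + Real.sqrt (kstar / k)) * ‖v - θs‖ := by
  classical
  obtain ⟨Q, hQ, ht, hdom⟩ := ht
  set S := (Function.support fun i => θs i).toFinset
  have hS : S.card ≤ kstar := by rwa [← Set.ncard_eq_toFinset_card']
  have hθs : ∀ i ∉ S, θs i = 0 := by simp [S]
  set w₁ : EuclideanSpace ℝ (Fin d) := WithLp.toLp 2 fun i => if i ∈ Q ∪ S then (v - θs) i else 0
  set w₂ : EuclideanSpace ℝ (Fin d) := WithLp.toLp 2 fun i => if i ∈ S \ Q then v i else 0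
  have hsplit : t - θs = w₁ - w₂ := by
    ext i
    by_cases hiQ : i ∈ Q <;> by_cases hiS : i ∈ S <;> simp [w₁, w₂, ht i, hiQ, hiS, hθs]
  have hsum_le : ∀ P : Finset (Fin d), ∑ i ∈ P, (v - θs) i ^ 2 ≤ ‖v - θs‖ ^ 2 := fun P => by
    rw [EuclideanSpace.real_norm_sq_eq]
    exact Finset.sum_le_univ_sum_of_nonneg fun i => sq_nonneg _
  have hw₁ : ‖w₁‖ ≤ ‖v - θs‖ := by
    refine le_of_pow_le_pow_left₀ two_ne_zero (norm_nonneg _) ?_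
    rw [EuclideanSpace.norm_sq_toLp_ite]
    exact hsum_le _
  have hw₂ : ‖w₂‖ ≤ Real.sqrt (kstar / k) * ‖v - θs‖ := by
    refine le_of_pow_le_pow_left₀ two_ne_zero (by positivity) ?_
    rw [EuclideanSpace.norm_sq_toLp_ite, mul_pow, Real.sq_sqrt (by positivity)]
    have hoff : ∑ i ∈ Q \ S, v i ^ 2 = ∑ i ∈ Q \ S, (v - θs) i ^ 2 :=
      Finset.sum_congr rfl fun i hi => by simp [hθs i (Finset.mem_sdiff.1 hi).2]
    calc ∑ i ∈ S \ Q, v i ^ 2 ≤ (S.card / Q.card : ℝ) * ∑ i ∈ Q \ S, v i ^ 2 :=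
          sum_sq_sdiff_le_card_div_card_mul hdom (hQ ▸ hS.trans hk)
      _ ≤ (kstar / k : ℝ) * ‖v - θs‖ ^ 2 := by
          rw [hoff, hQ]
          gcongr
          exact hsum_le _
  calc ‖t - θs‖ = ‖w₁ - w₂‖ := by rw [hsplit]
    _ ≤ ‖w₁‖ + ‖w₂‖ := norm_sub_le _ _
    _ ≤ (1 + Real.sqrt (kstar / k)) * ‖v - θs‖ := by linarith

theorem topk_newton_convergence_general {d : ℕ} (μ M : ℝ) (hμ : 0 < μ)
    (f' : EuclideanSpace ℝ (Fin d) → EuclideanSpace ℝ (Fin d))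
    (f'' : EuclideanSpace ℝ (Fin d) → EuclideanSpace ℝ (Fin d) →L[ℝ] EuclideanSpace ℝ (Fin d))
    (hhess : ∀ x, HasFDerivAt f' (f'' x) x)
    (hstrong : ∀ x v, μ * ‖v‖ ^ 2 ≤ ⟪v, f'' x v⟫)
    (hlip : ∀ x y, ‖f'' x - f'' y‖ ≤ M * ‖x - y‖)
    (kstar k : ℕ) (hk : kstar ≤ k)
    (θs : EuclideanSpace ℝ (Fin d)) (hθs : f' θs = 0)
    (hsparse : (Function.support fun i => θs i).ncard ≤ kstar)
    (θt u θnext : EuclideanSpace ℝ (Fin d)) (hu : f'' θt u = f' θt)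
    (hnext : IsTopK k (fun i => θt i - u i) (fun i => θnext i)) :
    ‖θnext - θs‖ ≤ (1 + Real.sqrt ((kstar : ℝ) / k)) * (M / (2 * μ)) * ‖θt - θs‖ ^ 2 := by
  calc ‖θnext - θs‖ ≤ (1 + Real.sqrt ((kstar : ℝ) / k)) * ‖θt - u - θs‖ :=
        norm_topK_sub_le hk hsparse hnext
    _ ≤ (1 + Real.sqrt ((kstar : ℝ) / k)) * (M / (2 * μ) * ‖θt - θs‖ ^ 2) := by
        gcongr
        exact norm_newton_step_sub_le hμ hhess hlip (hstrong θt) hθs hu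
    _ = (1 + Real.sqrt ((kstar : ℝ) / k)) * (M / (2 * μ)) * ‖θt - θs‖ ^ 2 := by ring

/-- Quadratic local convergence of the top-`k` Newton (I-OBS/Top-k) iteration: if `f` is
twice differentiable with `μ·I ⪯ ∇²f`, `M`-Lipschitz Hessian, `θ*` is a `k*`-sparse
point with `∇f(θ*) = 0`, and `θ_{t+1} = T_k(θ_t − H_t⁻¹∇f(θ_t))` with `k ≥ k*`, then
`‖θ_{t+1} − θ*‖ ≤ (1 + √(k*/k)) (M/(2μ)) ‖θ_t − θ*‖²`. -/
theorem topk_newton_convergence {d : ℕ} (μ M : ℝ) (hμ : 0 < μ)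
    (f : EuclideanSpace ℝ (Fin d) → ℝ)
    (f' : EuclideanSpace ℝ (Fin d) → EuclideanSpace ℝ (Fin d))
    (f'' : EuclideanSpace ℝ (Fin d) → EuclideanSpace ℝ (Fin d) →L[ℝ] EuclideanSpace ℝ (Fin d))
    (hgrad : ∀ x, HasGradientAt f (f' x) x)
    (hhess : ∀ x, HasFDerivAt f' (f'' x) x)
    (hstrong : ∀ x v, μ * ‖v‖ ^ 2 ≤ ⟪v, f'' x v⟫)
    (hlip : ∀ x y, ‖f'' x - f'' y‖ ≤ M * ‖x - y‖)
    (kstar k : ℕ) (hk : kstar ≤ k)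
    (θs : EuclideanSpace ℝ (Fin d)) (hθs : f' θs = 0)
    (hsparse : (Function.support fun i => θs i).ncard ≤ kstar)
    (θt u θnext : EuclideanSpace ℝ (Fin d)) (hu : f'' θt u = f' θt)
    (hnext : IsTopK k (fun i => θt i - u i) (fun i => θnext i)) :
    ‖θnext - θs‖ ≤ (1 + Real.sqrt ((kstar : ℝ) / k)) * (M / (2 * μ)) * ‖θt - θs‖ ^ 2 :=
  topk_newton_convergence_general μ M hμ f' f'' hhess hstrong hlip kstar k hk θs hθs hsparse θt u
    θnext hu hnext
end

section
/- For a vector u ∈ ℝ^d with ‖u‖₀ = k_u nonzero entries and for integers k < k_u, the quantity ‖T_k(u) − u‖₂²/(k_u − k) is nonincreasing in k; that is, for k_v ≤ k < k_u, ‖T_k(u) − u‖₂²/(k_u − k) ≤ ‖T_{k_v}(u) − u‖₂²/(k_u − k_v). -/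
open Finset

lemma avg_le_avg {ι : Type*} [DecidableEq ι] (A B : Finset ι) (f : ι → ℝ)
    (hf : ∀ i, 0 ≤ f i) (hA : A.Nonempty) (hcard : A.card ≤ B.card)
    (h1 : ∀ x ∈ A \ B, ∀ y ∈ B, f y ≤ f x)
    (h2 : ∀ x ∈ B \ A, ∀ y ∈ A, f y ≤ f x) :
    (∑ i ∈ A, f i) / A.card ≤ (∑ i ∈ B, f i) / B.card := by
  have hm : 0 < A.card := hA.card_pos
  have hn : 0 < B.card := lt_of_lt_of_le hm hcard
  rw [div_le_div_iff₀ (by exact_mod_cast hm) (by exact_mod_cast hn)]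
  rcases (A \ B).eq_empty_or_nonempty with hAB | ⟨x₀, hx₀⟩
  · -- A ⊆ B
    have hsub : A ⊆ B := by
      intro x hx
      by_contra hxB
      exact (Finset.eq_empty_iff_forall_notMem.mp hAB x) (Finset.mem_sdiff.mpr ⟨hx, hxB⟩)
    have hsplit : ∑ i ∈ B \ A, f i + ∑ i ∈ A, f i = ∑ i ∈ B, f i :=
      Finset.sum_sdiff hsub
    have hcards : ((B \ A).card : ℝ) + A.card = B.card := by
      exact_mod_cast congrArg (Nat.cast : ℕ → ℝ) (Finset.card_sdiff_add_card_eq_card hsub)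
    have key : ((B \ A).card : ℝ) * ∑ i ∈ A, f i ≤ (A.card : ℝ) * ∑ x ∈ B \ A, f x := by
      have h3 : ∀ x ∈ B \ A, (∑ i ∈ A, f i) ≤ (A.card : ℝ) * f x := by
        intro x hx
        have := Finset.sum_le_card_nsmul A f (f x) (fun y hy => h2 x hx y hy)
        simpa [nsmul_eq_mul] using this
      calc ((B \ A).card : ℝ) * ∑ i ∈ A, f i = ∑ _x ∈ B \ A, ∑ i ∈ A, f i := by
            rw [Finset.sum_const, nsmul_eq_mul]
        _ ≤ ∑ x ∈ B \ A, (A.card : ℝ) * f x := Finset.sum_le_sum h3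
        _ = (A.card : ℝ) * ∑ x ∈ B \ A, f x := by rw [Finset.mul_sum]
    nlinarith [Finset.sum_nonneg (fun i (_ : i ∈ A) => hf i)]
  · rcases (B \ A).eq_empty_or_nonempty with hBA | ⟨y₀, hy₀⟩
    · -- B ⊆ A, so A = B, contradicting A \ B nonempty
      have hsub : B ⊆ A := by
        intro x hx
        by_contra hxA
        exact (Finset.eq_empty_iff_forall_notMem.mp hBA x) (Finset.mem_sdiff.mpr ⟨hx, hxA⟩)
      have : B = A := Finset.eq_of_subset_of_card_le hsub hcard
      subst this
      simp at hx₀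
    · -- both differences nonempty
      set c := f x₀ with hc
      have hcy : f y₀ = c := by
        have h1' := h1 x₀ hx₀ y₀ (Finset.mem_sdiff.mp hy₀).1
        have h2' := h2 y₀ hy₀ x₀ (Finset.mem_sdiff.mp hx₀).1
        linarith
      have hAc : ∀ x ∈ A \ B, f x = c := by
        intro x hx
        have h2' := h2 y₀ hy₀ x (Finset.mem_sdiff.mp hx).1
        have h1' := h1 x hx y₀ (Finset.mem_sdiff.mp hy₀).1
        linarith
      have hBc : ∀ x ∈ B \ A, f x = c := by
        intro x hx
        have h1' := h1 x₀ hx₀ x (Finset.mem_sdiff.mp hx).1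
        have h2' := h2 x hx x₀ (Finset.mem_sdiff.mp hx₀).1
        linarith
      have hIc : ∀ y ∈ A ∩ B, f y ≤ c := by
        intro y hy
        have := h2 y₀ hy₀ y (Finset.mem_inter.mp hy).1
        linarith [hcy]
      have hsumA : ∑ i ∈ A, f i = ∑ i ∈ A ∩ B, f i + (A \ B).card * c := by
        rw [← Finset.sum_inter_add_sum_sdiff A B f]
        congr 1
        rw [Finset.sum_congr rfl hAc, Finset.sum_const, nsmul_eq_mul]
      have hsumB : ∑ i ∈ B, f i = ∑ i ∈ A ∩ B, f i + (B \ A).card * c := by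
        rw [← Finset.sum_inter_add_sum_sdiff B A f, Finset.inter_comm]
        congr 1
        rw [Finset.sum_congr rfl hBc, Finset.sum_const, nsmul_eq_mul]
      have hP : ∑ i ∈ A ∩ B, f i ≤ ((A ∩ B).card : ℝ) * c := by
        have := Finset.sum_le_card_nsmul (A ∩ B) f c hIc
        simpa [nsmul_eq_mul] using this
      have hcardA : ((A ∩ B).card : ℝ) + (A \ B).card = A.card := by
        exact_mod_cast congrArg (Nat.cast : ℕ → ℝ) (Finset.card_inter_add_card_sdiff A B)
      have hcardB : ((A ∩ B).card : ℝ) + (B \ A).card = B.card := by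
        have : (B ∩ A).card + (B \ A).card = B.card := Finset.card_inter_add_card_sdiff B A
        rw [Finset.inter_comm] at this
        exact_mod_cast congrArg (Nat.cast : ℕ → ℝ) this
      have hab : ((A \ B).card : ℝ) ≤ (B \ A).card := by
        have : (A.card : ℝ) ≤ B.card := by exact_mod_cast hcard
        linarith
      have hc0 : 0 ≤ c := hf x₀
      rw [hsumA, hsumB, ← hcardA, ← hcardB]
      nlinarith [mul_le_mul_of_nonneg_right hP (by linarith :
        (0:ℝ) ≤ ((B \ A).card : ℝ) - (A \ B).card)]

/-- The average of squared dropped coordinates `‖T_k(u) − u‖₂²/(k_u − k)` is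
nonincreasing in `k`: for `k_v ≤ k < k_u`,
`‖T_k(u) − u‖₂²/(k_u − k) ≤ ‖T_{k_v}(u) − u‖₂²/(k_u − k_v)`. -/
theorem topk_avg_monotone {d : ℕ} (u : Fin d → ℝ) (ku kv k : ℕ)
    (hu : (Function.support u).ncard = ku)
    (hk₁ : kv ≤ k) (hk₂ : k < ku)
    (tk tkv : Fin d → ℝ) (htk : IsTopK k u tk) (htkv : IsTopK kv u tkv) :
    (∑ i, (tk i - u i) ^ 2) / (ku - k : ℝ) ≤
      (∑ i, (tkv i - u i) ^ 2) / (ku - kv : ℝ) := by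
  classical
  obtain ⟨Q, hQcard, hQt, hQtop⟩ := htk
  obtain ⟨Qv, hQvcard, hQvt, hQvtop⟩ := htkv
  set S : Finset (Fin d) := Finset.univ.filter (fun i => u i ≠ 0) with hS
  have hSsupp : Function.support u = ↑S := by
    ext i; simp [hS, Function.mem_support]
  have hScard : S.card = ku := by
    rw [hSsupp, Set.ncard_coe_finset] at hu; exact hu
  have hsub : ∀ (R : Finset (Fin d)), R.card < ku →
      (∀ i ∈ R, ∀ j ∉ R, |u j| ≤ |u i|) → R ⊆ S := by
    intro R hRcard hRtop i hi
    simp only [hS, Finset.mem_filter, Finset.mem_univ, true_and]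
    intro hui
    have hss : Function.support u ⊆ ↑R := by
      intro j hj
      by_contra hjR
      have := hRtop i hi j (by simpa using hjR)
      rw [hui, abs_zero] at this
      exact hj (abs_eq_zero.mp (le_antisymm this (abs_nonneg _)))
    have : ku ≤ R.card := by
      rw [← hu, ← Set.ncard_coe_finset R]
      exact Set.ncard_le_ncard hss (R.finite_toSet)
    omega
  have hQS : Q ⊆ S := hsub Q (by omega) hQtop
  have hQvS : Qv ⊆ S := hsub Qv (by omega) hQvtop
  set A : Finset (Fin d) := S \ Q with hA
  set B : Finset (Fin d) := S \ Qv with hB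
  have hAcard : A.card = ku - k := by
    rw [hA, Finset.card_sdiff_of_subset hQS, hScard, hQcard]
  have hBcard : B.card = ku - kv := by
    rw [hB, Finset.card_sdiff_of_subset hQvS, hScard, hQvcard]
  have sum_eq : ∀ (R : Finset (Fin d)) (t : Fin d → ℝ),
      (∀ i, t i = if i ∈ R then u i else 0) →
      ∑ i, (t i - u i) ^ 2 = ∑ i ∈ S \ R, u i ^ 2 := by
    intro R t ht
    have e2 : ∀ i ∈ Finset.univ, i ∉ S \ R → (t i - u i) ^ 2 = 0 := by
      intro i _ hi
      rw [Finset.mem_sdiff] at hi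
      push_neg at hi
      by_cases hiR : i ∈ R
      · rw [ht i, if_pos hiR]; ring
      · have hiS : i ∉ S := fun h => hiR (hi h)
        have : u i = 0 := by
          by_contra h
          exact hiS (by simp [hS, h])
        rw [ht i, if_neg hiR, this]; ring
    rw [← Finset.sum_subset (Finset.subset_univ (S \ R)) e2]
    refine Finset.sum_congr rfl fun i hi => ?_
    rw [ht i, if_neg (Finset.mem_sdiff.mp hi).2]; ring
  rw [sum_eq Q tk hQt, sum_eq Qv tkv hQvt]
  have hdk : ((ku : ℝ) - k) = (A.card : ℝ) := by
    rw [hAcard, Nat.cast_sub (le_of_lt hk₂)]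
  have hdkv : ((ku : ℝ) - kv) = (B.card : ℝ) := by
    rw [hBcard, Nat.cast_sub (by omega)]
  rw [hdk, hdkv]
  refine avg_le_avg A B (fun i => u i ^ 2) (fun i => sq_nonneg _) ?_ ?_ ?_ ?_
  · rw [← Finset.card_pos, hAcard]; omega
  · rw [hAcard, hBcard]; omega
  · intro x hx y hy
    rw [Finset.mem_sdiff] at hx hy
    have hxQv : x ∈ Qv := by
      rcases hx with ⟨hx1, hx2⟩
      by_contra h
      exact hx2 (Finset.mem_sdiff.mpr ⟨(Finset.mem_sdiff.mp hx1).1, h⟩)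
    have habs := hQvtop x hxQv y hy.2
    calc u y ^ 2 = |u y| ^ 2 := (sq_abs _).symm
      _ ≤ |u x| ^ 2 := by exact pow_le_pow_left₀ (abs_nonneg _) habs 2
      _ = u x ^ 2 := sq_abs _
  · intro x hx y hy
    rw [Finset.mem_sdiff] at hx hy
    have hxQ : x ∈ Q := by
      rcases hx with ⟨hx1, hx2⟩
      by_contra h
      exact hx2 (Finset.mem_sdiff.mpr ⟨(Finset.mem_sdiff.mp hx1).1, h⟩)
    have habs := hQtop x hxQ y hy.2
    calc u y ^ 2 = |u y| ^ 2 := (sq_abs _).symm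
      _ ≤ |u x| ^ 2 := by exact pow_le_pow_left₀ (abs_nonneg _) habs 2
      _ = u x ^ 2 := sq_abs _
end
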